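/- Let F be a map from paths in ℝ^d to paths in ℝ^t, and let H : T(ℝ^t) → T(ℝ^d) be a linear map such that ⟨σ(F(X)), x⟩ = ⟨σ(X), H x⟩ for all paths X in ℝ^d and all x ∈ T(ℝ^t). Then H is a shuffle homomorphism: H(x₁ ⧢ x₂) = H(x₁) ⧢ H(x₂) for all x₁, x₂ ∈ T(ℝ^t). -/

import Mathlib

open scoped BigOperators TensorProduct

namespace PathVarieties

/-- Words over an alphabet `α`; the letters `{1,…,d}` of `ℝ^d` correspond to `α = Fin d`. -/
abbrev Word (α : Type*) := List α

/-- The tensor algebra `T(ℝ^d)`, identified with the free real vector space on words. -/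
abbrev TA (α : Type*) := Word α →₀ ℝ

/-- The list of all (riffle) shuffles of two words. -/
def shuffles {α : Type*} : Word α → Word α → List (Word α)
  | [], v => [v]
  | a :: u, [] => [a :: u]
  | a :: u, b :: v =>
      ((shuffles u (b :: v)).map (a :: ·)) ++ ((shuffles (a :: u) v).map (b :: ·))
termination_by u v => u.length + v.length
decreasing_by all_goals (simp only [List.length_cons]; omega)

/-- Shuffle product of two words, as an element of `T(ℝ^d)`. -/
noncomputable def shw {α : Type*} (u v : Word α) : TA α :=
  ((shuffles u v).map fun w => Finsupp.single w (1 : ℝ)).sum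

/-- The shuffle product `⧢` on `T(ℝ^d)`, the bilinear extension of the shuffle of words. -/
noncomputable def sh {α : Type*} (x y : TA α) : TA α :=
  x.sum fun u cu => y.sum fun v cv => (cu * cv) • shw u v

/-- Right halfshuffle `u ≻ v` of words (`v` nonempty): shuffle `u` with `v` minus its
last letter, then append the last letter of `v`.  (This is the unique bilinear operation
with `w ≻ a = wa` and `w ≻ (va) = (w≻v + v≻w)a`.) -/
noncomputable def rshw {α : Type*} (u v : Word α) : TA α :=
  ((shuffles u v.dropLast).map fun w =>
    Finsupp.single (w ++ v.drop (v.length - 1)) (1 : ℝ)).sum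

/-- Right halfshuffle `≻` on `T^{≥1}(ℝ^d)`, extended bilinearly. -/
noncomputable def rsh {α : Type*} (x y : TA α) : TA α :=
  x.sum fun u cu => y.sum fun v cv => (cu * cv) • rshw u v

/-- Left halfshuffle `u ≺ v` of words (`u` nonempty): the first letter of `u` followed by
the shuffle of the rest of `u` with `v`.  (This is the unique bilinear operation with
`a ≺ w = aw` and `(av) ≺ w = a(w≺v + v≺w)`.) -/
noncomputable def lshw {α : Type*} (u v : Word α) : TA α :=
  ((shuffles u.tail v).map fun w => Finsupp.single (u.take 1 ++ w) (1 : ℝ)).sum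

/-- Left halfshuffle `≺` on `T^{≥1}(ℝ^d)`, extended bilinearly. -/
noncomputable def lsh {α : Type*} (x y : TA α) : TA α :=
  x.sum fun u cu => y.sum fun v cv => (cu * cv) • lshw u v

/-- The antipode `𝒜`, with `𝒜(i₁⋯iₙ) = (−1)ⁿ iₙ⋯i₁`. -/
noncomputable def antipode {α : Type*} (x : TA α) : TA α :=
  x.sum fun w c => Finsupp.single w.reverse (((-1 : ℝ) ^ w.length) * c)

/-- Helper for `Λ_B`: value on a reversed word. -/
noncomputable def lamRev {α β : Type*} (B : α → TA β) : Word α → TA β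
  | [] => Finsupp.single [] 1
  | [i] => B i
  | i :: w => rsh (lamRev B w) (B i)

/-- `Λ_B` on a word: `Λ_B e = e`, `Λ_B i = B i`, `Λ_B (w·i) = (Λ_B w) ≻ (Λ_B i)`. -/
noncomputable def lamW {α β : Type*} (B : α → TA β) (w : Word α) : TA β :=
  lamRev B w.reverse

/-- The linear map `Λ_B : T(ℝ^t) → T(ℝ^d)` induced by `B` on letters. -/
noncomputable def Lam {α β : Type*} (B : α → TA β) (x : TA α) : TA β :=
  x.sum fun w c => c • lamW B w

/-- `splitEmb e j n w = Σ_{w = u₁⋯uₙ} e_j(u₁) ⧢ e_{j+1}(u₂) ⧢ ⋯ ⧢ e_{j+n−1}(uₙ)`,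
the sum over all splittings of `w` into `n` consecutive (possibly empty) factors,
each factor relabelled letterwise by `e`. -/
noncomputable def splitEmb {α β : Type*} (e : ℕ → α → β) : ℕ → ℕ → Word α → TA β
  | _, 0, w => if w.isEmpty then Finsupp.single ([] : Word β) (1 : ℝ) else 0
  | j, k + 1, w => ∑ m ∈ Finset.range (w.length + 1),
      sh (Finsupp.single ((w.take m).map (e j)) (1 : ℝ)) (splitEmb e (j + 1) k (w.drop m))

/-- `Σ_{x=uv} f(u)·v`: deconcatenate, evaluate the functional `f` on prefixes. -/
noncomputable def leftAct {α : Type*} (f : Word α → ℝ) (x : TA α) : TA α :=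
  x.sum fun w c => c • ∑ k ∈ Finset.range (w.length + 1),
    f (w.take k) • Finsupp.single (w.drop k) (1 : ℝ)

/-- `Σ_{x=uv} u·f(v)`: deconcatenate, evaluate the functional `f` on suffixes. -/
noncomputable def rightAct {α : Type*} (f : Word α → ℝ) (x : TA α) : TA α :=
  x.sum fun w c => c • ∑ k ∈ Finset.range (w.length + 1),
    f (w.drop k) • Finsupp.single (w.take k) (1 : ℝ)

/-- A raw path: a time horizon `T` together with a map `ℝ → ℝ^α`
(only the restriction to `[0,T]` is relevant). -/
structure RawPath (α : Type*) where
  T : ℝ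
  toFun : ℝ → α → ℝ

/-- A path: positive time horizon, continuous on `[0,T]` and piecewise continuously
differentiable there (witnessed by a partition `0 = τ₀ < τ₁ < ⋯ < τₙ = T`). -/
def IsPath {α : Type*} (X : RawPath α) : Prop :=
  0 < X.T ∧ (∀ i, ContinuousOn (fun t => X.toFun t i) (Set.Icc 0 X.T)) ∧
    ∃ (n : ℕ) (τ : Fin (n + 1) → ℝ), StrictMono τ ∧ τ 0 = 0 ∧ τ (Fin.last n) = X.T ∧
      ∀ (k : Fin n) (i : α), ContDiffOn ℝ 1 (fun t => X.toFun t i)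
        (Set.Icc (τ k.castSucc) (τ k.succ))

/-- Iterated integrals, by recursion on the reversed word:
`sigRev X (i :: w) t = ∫₀ᵗ ⟨σ(X)ₛ, w.reverse⟩ dX⁽ⁱ⁾(s)`. -/
noncomputable def sigRev {α : Type*} (X : ℝ → α → ℝ) : Word α → ℝ → ℝ
  | [], _ => 1
  | i :: w, t => ∫ s in (0 : ℝ)..t, sigRev X w s * deriv (fun u => X u i) s

/-- `⟨σ(X)_t, w⟩`, the iterated-integrals signature of `X` stopped at time `t`. -/
noncomputable def sigUpTo {α : Type*} (X : RawPath α) (t : ℝ) (w : Word α) : ℝ :=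
  sigRev X.toFun w.reverse t

/-- `⟨σ(X), w⟩`, the iterated-integrals signature of the path `X` at a word `w`. -/
noncomputable def sig {α : Type*} (X : RawPath α) (w : Word α) : ℝ :=
  sigUpTo X X.T w

/-- Pairing of a word-indexed functional with an element of `T(ℝ^d)`. -/
noncomputable def pairF {α : Type*} (f : Word α → ℝ) (x : TA α) : ℝ :=
  x.sum fun w c => c * f w

/-- `⟨σ(X), x⟩` for a tensor `x ∈ T(ℝ^d)` (linear in `x`). -/
noncomputable def pair {α : Type*} (X : RawPath α) (x : TA α) : ℝ :=
  Finsupp.linearCombination ℝ (sig X) x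

/-- The path variety `𝒱(W)` of all paths whose signature kills every element of `W`. -/
def V {α : Type*} (W : Set (TA α)) : Set (RawPath α) :=
  {X | IsPath X ∧ ∀ x ∈ W, pair X x = 0}

/-- `ℐ(M)`, the space of tensors killed by the signature of every path in `M`. -/
noncomputable def Idl {α : Type*} (M : Set (RawPath α)) : Submodule ℝ (TA α) :=
  ⨅ X ∈ M, LinearMap.ker (Finsupp.linearCombination ℝ (sig X))

/-- Concatenation `X ⊔ Y` of paths. -/
noncomputable def concat {α : Type*} (X Y : RawPath α) : RawPath α where
  T := X.T + Y.T
  toFun := fun t i =>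
    if t ≤ X.T then X.toFun t i else Y.toFun (t - X.T) i + X.toFun X.T i - Y.toFun 0 i

/-- Time reversal `⟵X`. -/
def timeRev {α : Type*} (X : RawPath α) : RawPath α :=
  ⟨X.T, fun t i => X.toFun (X.T - t) i⟩

/-- `concatIter X n = X^{⊔(n+1)}`. -/
noncomputable def concatIter {α : Type*} (X : RawPath α) : ℕ → RawPath α
  | 0 => X
  | n + 1 => concat (concatIter X n) X

/-- `X^{⊔n}`, the `n`-fold concatenation of `X` with itself (intended for `n ≥ 1`). -/
noncomputable def concatPow {α : Type*} (X : RawPath α) (n : ℕ) : RawPath α :=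
  concatIter X (n - 1)

/-- `concatFold f k = f 0 ⊔ f 1 ⊔ ⋯ ⊔ f k`. -/
noncomputable def concatFold {α : Type*} (f : ℕ → RawPath α) : ℕ → RawPath α
  | 0 => f 0
  | k + 1 => concat (concatFold f k) (f (k + 1))

/-- The deconcatenation coproduct `Δ : T(ℝ^d) → T(ℝ^d) ⊗ T(ℝ^d)`,
`Δw = Σ_{w=uv} u ⊗ v`. -/
noncomputable def deconc {α : Type*} (x : TA α) : TensorProduct ℝ (TA α) (TA α) :=
  x.sum fun w c => c • ∑ k ∈ Finset.range (w.length + 1),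
    (Finsupp.single (w.take k) (1 : ℝ)) ⊗ₜ[ℝ] (Finsupp.single (w.drop k) (1 : ℝ))

/-!
For every path `X`, `x ↦ ⟨σ(X), x⟩` is multiplicative for `⧢`: the iterated integrals are
absolutely continuous in the upper limit, and integrating by parts gives the recursion of
the shuffle product, read on reversed words (shuffling commutes with reversal). Hence
`⟨σ(X), H(x₁ ⧢ x₂) - H x₁ ⧢ H x₂⟩ = ⟨σ(F X), x₁⟩⟨σ(F X), x₂⟩ - ⟨σ(X), H x₁⟩⟨σ(X), H x₂⟩ = 0`.

It remains to see that signatures separate points. If `⟨σ(X), y⟩ = 0` for every path `X`,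
append to `X` a straight unit-time segment of speed `a` in direction `i`. By Chen's identity
the pairing becomes a polynomial in `a`, vanishing identically, whose coefficient of `a` is
`⟨σ(X), y'⟩` with `y' w = y (w i)`. So `y'` is annihilated too, and induction on words from
the right, starting from the constant path (which detects the coefficient of the empty
word), gives `y = 0`.
-/

open MeasureTheory Set
open scoped Nat

variable {α : Type*}

lemma shuffles_nil_left (v : Word α) : shuffles [] v = [v] := by
  cases v <;> simp [shuffles]

lemma shuffles_nil_right (u : Word α) : shuffles u [] = [u] := by
  cases u <;> simp [shuffles]

lemma shuffles_cons_cons (a b : α) (u v : Word α) :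
    shuffles (a :: u) (b :: v)
      = (shuffles u (b :: v)).map (a :: ·) ++ (shuffles (a :: u) v).map (b :: ·) := by
  rw [shuffles]

lemma shuffles_append_singleton_perm (a b : α) (x y : Word α) :
    (shuffles (x ++ [a]) (y ++ [b])).Perm
      ((shuffles x (y ++ [b])).map (· ++ [a]) ++ (shuffles (x ++ [a]) y).map (· ++ [b])) := by
  induction x generalizing y with
  | nil =>
    induction y with
    | nil => simpa [shuffles_cons_cons, shuffles_nil_left, shuffles_nil_right] using .swap _ _ _
    | cons e y ih =>
      simp only [List.nil_append, List.cons_append, shuffles_cons_cons, shuffles_nil_left] at ih ⊢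
      refine (ih.map (e :: ·) |>.append_left _).trans ?_
      simpa [Function.comp_def] using .swap _ _ _
  | cons c x ihx =>
    induction y with
    | nil =>
      have := ihx []
      simp only [List.nil_append, List.cons_append, shuffles_cons_cons, shuffles_nil_right]
        at this ⊢
      refine (this.map (c :: ·) |>.append_right _).trans ?_
      simpa [Function.comp_def] using .append_left _ (.swap _ _ _)
    | cons e y ihy =>
      simp only [List.cons_append, shuffles_cons_cons] at ihy ⊢
      refine ((ihx (e :: y)).map (c :: ·) |>.append (ihy.map (e :: ·))).trans ?_
      simp only [List.cons_append, List.map_append, List.map_map, Function.comp_def,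
        List.append_assoc]
      refine .append_left _ ?_
      simp only [← List.append_assoc]
      exact .append_right _ List.perm_append_comm

lemma map_reverse_shuffles_perm (u v : Word α) :
    ((shuffles u v).map List.reverse).Perm (shuffles u.reverse v.reverse) := by
  induction u, v using shuffles.induct with
  | case1 v => simp [shuffles_nil_left]
  | case2 a u => simp [shuffles_nil_right]
  | case3 a u b v ih₁ ih₂ =>
    rw [shuffles_cons_cons, List.reverse_cons, List.reverse_cons]
    refine List.Perm.trans ?_ (shuffles_append_singleton_perm a b _ _).symm
    simp only [List.map_append, List.map_map, Function.comp_def, List.reverse_cons]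
    simpa [List.map_map, Function.comp_def] using
      (ih₁.map (· ++ [a])).append (ih₂.map (· ++ [b]))

lemma intervalIntegrable_list_sum_map {ι : Type*} {a b : ℝ} (L : List ι) {f : ι → ℝ → ℝ}
    (hf : ∀ i ∈ L, IntervalIntegrable (f i) volume a b) :
    IntervalIntegrable (fun s => (L.map (f · s)).sum) volume a b := by
  simp_rw [← Fin.sum_univ_fun_getElem]
  simpa only [← Finset.sum_apply] using
    IntervalIntegrable.sum _ fun i _ => hf _ (List.getElem_mem _)

lemma intervalIntegral_list_sum_map {ι : Type*} {a b : ℝ} (L : List ι) {f : ι → ℝ → ℝ}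
    (hf : ∀ i ∈ L, IntervalIntegrable (f i) volume a b) :
    ∫ s in a..b, (L.map (f · s)).sum = (L.map fun i => ∫ s in a..b, f i s).sum := by
  simp_rw [← Fin.sum_univ_fun_getElem]
  exact intervalIntegral.integral_finsetSum fun i _ => hf _ (List.getElem_mem _)

lemma integral_mul_integral {f g : ℝ → ℝ} {t : ℝ} (hf : IntervalIntegrable f volume 0 t)
    (hg : IntervalIntegrable g volume 0 t) :
    (∫ s in 0..t, f s) * (∫ s in 0..t, g s)
      = ∫ s in 0..t, ((∫ r in 0..s, f r) * g s + (∫ r in 0..s, g r) * f s) := by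
  have hF := hf.absolutelyContinuousOnInterval_intervalIntegral left_mem_uIcc
  have hG := hg.absolutelyContinuousOnInterval_intervalIntegral left_mem_uIcc
  have := hF.integral_deriv_mul_eq_sub hG
  simp only [intervalIntegral.integral_same, mul_zero, sub_zero] at this
  rw [← this]
  refine intervalIntegral.integral_congr_ae ?_
  filter_upwards [hf.ae_hasDerivAt_integral, hg.ae_hasDerivAt_integral] with s hfs hgs hs
  have hs' := uIoc_subset_uIcc hs
  rw [(hfs hs' 0 left_mem_uIcc).deriv, (hgs hs' 0 left_mem_uIcc).deriv]
  ring

namespace IsPath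

variable {X : RawPath α} (hX : IsPath X)
include hX

lemma intervalIntegrable_deriv (i : α) :
    IntervalIntegrable (deriv fun s => X.toFun s i) volume 0 X.T := by
  obtain ⟨-, -, n, τ, hτ, hτ0, hτn, hpieces⟩ := hX
  have hpiece (k : ℕ) (hk : k < n) : IntervalIntegrable (deriv fun s => X.toFun s i) volume
      (τ (Fin.ofNat (n + 1) k)) (τ (Fin.ofNat (n + 1) (k + 1))) := by
    have h₁ : Fin.ofNat (n + 1) k = (⟨k, hk⟩ : Fin n).castSucc := Fin.ext (by simp; omega)
    have h₂ : Fin.ofNat (n + 1) (k + 1) = (⟨k, hk⟩ : Fin n).succ := Fin.ext (by simp; omega)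
    rw [h₁, h₂]
    refine ContDiffOn.absolutelyContinuousOnInterval ?_ |>.intervalIntegrable_deriv
    rw [uIcc_of_le (hτ Fin.castSucc_lt_succ).le]
    exact hpieces _ i
  simpa [hτ0, hτn] using IntervalIntegrable.trans_iterate hpiece

lemma continuousOn_sigRev (u : Word α) : ContinuousOn (sigRev X.toFun u) (Icc 0 X.T) := by
  rw [← uIcc_of_le hX.1.le]
  induction u with
  | nil => exact continuousOn_const
  | cons i w ih =>
    exact intervalIntegral.continuousOn_primitive_interval'
      ((hX.intervalIntegrable_deriv i).continuousOn_mul ih) left_mem_uIcc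

lemma intervalIntegrable_sigRev_mul_deriv (u : Word α) (i : α) {p q : ℝ}
    (hp : p ∈ Icc 0 X.T) (hq : q ∈ Icc 0 X.T) :
    IntervalIntegrable (fun s => sigRev X.toFun u s * deriv (fun r => X.toFun r i) s)
      volume p q := by
  rw [← uIcc_of_le hX.1.le] at hp hq
  refine IntervalIntegrable.mono_set ?_ (uIcc_subset_uIcc hp hq)
  exact (hX.intervalIntegrable_deriv i).continuousOn_mul
    (uIcc_of_le hX.1.le ▸ hX.continuousOn_sigRev u)

lemma sigRev_mul_sigRev (u v : Word α) {t : ℝ} (ht : t ∈ Icc 0 X.T) :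
    sigRev X.toFun u t * sigRev X.toFun v t
      = ((shuffles u v).map (sigRev X.toFun · t)).sum := by
  induction u, v using shuffles.induct generalizing t with
  | case1 v => simp [shuffles_nil_left, sigRev]
  | case2 a u => simp [shuffles_nil_right, sigRev]
  | case3 a u b v ih₁ ih₂ =>
    have hint (w : Word α) (c : α) := hX.intervalIntegrable_sigRev_mul_deriv w c
      (left_mem_Icc.2 hX.1.le) ht
    set D : α → ℝ → ℝ := fun c s => deriv (fun r => X.toFun r c) s
    calc sigRev X.toFun (a :: u) t * sigRev X.toFun (b :: v) t
        = ∫ s in 0..t, (sigRev X.toFun (a :: u) s * (sigRev X.toFun v s * D b s)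
            + sigRev X.toFun (b :: v) s * (sigRev X.toFun u s * D a s)) :=
          integral_mul_integral (hint u a) (hint v b)
      _ = ∫ s in 0..t, (((shuffles u (b :: v)).map (sigRev X.toFun · s * D a s)).sum
            + ((shuffles (a :: u) v).map (sigRev X.toFun · s * D b s)).sum) := by
          refine intervalIntegral.integral_congr fun s hs => ?_
          rw [uIcc_of_le ht.1] at hs
          have hs' : s ∈ Icc 0 X.T := ⟨hs.1, hs.2.trans ht.2⟩
          rw [List.sum_map_mul_right, List.sum_map_mul_right, ← ih₁ hs', ← ih₂ hs']
          ring
      _ = ((shuffles u (b :: v)).map fun w => sigRev X.toFun (a :: w) t).sum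
            + ((shuffles (a :: u) v).map fun w => sigRev X.toFun (b :: w) t).sum := by
          rw [intervalIntegral.integral_add
              (intervalIntegrable_list_sum_map _ fun w _ => hint w a)
              (intervalIntegrable_list_sum_map _ fun w _ => hint w b),
            intervalIntegral_list_sum_map _ fun w _ => hint w a,
            intervalIntegral_list_sum_map _ fun w _ => hint w b]
          rfl
      _ = ((shuffles (a :: u) (b :: v)).map (sigRev X.toFun · t)).sum := by
          simp [shuffles_cons_cons, Function.comp_def]

lemma sig_mul_sig (u v : Word α) : sig X u * sig X v = ((shuffles u v).map (sig X)).sum := by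
  rw [sig, sig, sigUpTo, sigUpTo, hX.sigRev_mul_sigRev _ _ (right_mem_Icc.2 hX.1.le),
    ← ((map_reverse_shuffles_perm u v).map _).sum_eq, List.map_map]
  rfl

lemma pair_sh (x y : TA α) : pair X (sh x y) = pair X x * pair X y := by
  have hshw (u v : Word α) : pair X (shw u v) = sig X u * sig X v := by
    simp [shw, pair, map_list_sum, hX.sig_mul_sig, Function.comp_def]
  simp only [pair, Finsupp.linearCombination_apply, Finsupp.sum_mul, sh, map_finsuppSum,
    map_smul]
  refine Finsupp.sum_congr fun u _ => ?_
  rw [Finsupp.mul_sum]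
  refine Finsupp.sum_congr fun v _ => ?_
  rw [← Finsupp.linearCombination_apply, ← pair, hshw, smul_eq_mul, smul_eq_mul, smul_eq_mul]
  ring

end IsPath

def constPath (α : Type*) : RawPath α := ⟨1, fun _ _ => 0⟩

lemma isPath_constPath : IsPath (constPath α) := by
  refine ⟨one_pos, fun _ => continuousOn_const, 1, ![0, 1], ?_, rfl, rfl,
    fun _ _ => contDiffOn_const⟩
  simp [Fin.strictMono_iff_lt_succ]

lemma pair_constPath (y : TA α) : pair (constPath α) y = y [] := by
  have hsig (w : Word α) : sig (constPath α) w = if w = [] then 1 else 0 := by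
    obtain ⟨u, rfl⟩ : ∃ u, w = u.reverse := ⟨w.reverse, by simp⟩
    cases u with
    | nil => simp [sig, sigUpTo, sigRev]
    | cons i u => simp [sig, sigUpTo, sigRev.eq_2, constPath]
  rw [pair, Finsupp.linearCombination_apply, Finsupp.sum_eq_single []] <;> simp_all

/-- The path `X` followed by a straight segment of unit duration and velocity `v`. -/
noncomputable def appendSegment (X : RawPath α) (v : α → ℝ) : RawPath α where
  T := X.T + 1
  toFun s j := X.toFun (min s X.T) j + v j * max (s - X.T) 0

lemma appendSegment_toFun_of_le {X : RawPath α} (v : α → ℝ) {s : ℝ} (hs : s ≤ X.T) (j : α) :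
    (appendSegment X v).toFun s j = X.toFun s j := by
  simp [appendSegment, hs]

lemma isPath_appendSegment {X : RawPath α} (hX : IsPath X) (v : α → ℝ) :
    IsPath (appendSegment X v) := by
  obtain ⟨hT, hcont, n, τ, hτ, hτ0, hτn, hpieces⟩ := hX
  have hτT (k : Fin (n + 1)) : τ k ≤ X.T := hτn ▸ hτ.monotone (Fin.le_last k)
  refine ⟨by simp [appendSegment]; linarith, fun j => ?_, n + 1,
    Fin.snoc (α := fun _ => ℝ) τ (X.T + 1), ?_, ?_, by simp [appendSegment], ?_⟩
  · exact ((hcont j).comp (continuous_id.min continuous_const).continuousOn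
      fun s hs => ⟨le_min hs.1 hT.le, min_le_right _ _⟩).add
      (by fun_prop : Continuous fun s => v j * max (s - X.T) 0).continuousOn
  · simpa [Fin.insertNth_last'] using
      Fin.strictMono_insertNth_last hτ (X.T + 1) (by rw [hτn]; linarith)
  · exact (Fin.snoc_castSucc (α := fun _ => ℝ) (i := 0) ..).trans hτ0
  · intro k j
    induction k using Fin.lastCases with
    | last =>
      simp only [Fin.snoc_castSucc, Fin.succ_last, Fin.snoc_last, hτn]
      have : ContDiff ℝ 1 fun s => X.toFun X.T j + v j * (s - X.T) := by fun_prop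
      refine this.contDiffOn.congr fun s hs => ?_
      simp [appendSegment, hs.1]
    | cast k =>
      rw [Fin.succ_castSucc, Fin.snoc_castSucc, Fin.snoc_castSucc]
      exact (hpieces k j).congr fun s hs => appendSegment_toFun_of_le v (hs.2.trans (hτT _)) j

lemma sigRev_appendSegment_of_mem_Icc (X : RawPath α) (v : α → ℝ) (u : Word α) {t : ℝ}
    (ht : t ∈ Icc 0 X.T) : sigRev (appendSegment X v).toFun u t = sigRev X.toFun u t := by
  induction u generalizing t with
  | nil => rfl
  | cons i w ih =>
    rw [sigRev.eq_2, sigRev.eq_2]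
    refine intervalIntegral.integral_congr_ae ?_
    filter_upwards [compl_mem_ae_iff.2 (measure_singleton t)] with s hst hs
    rw [uIoc_of_le ht.1] at hs
    have hsT : s < X.T := (lt_of_le_of_ne hs.2 hst).trans_le ht.2
    rw [ih ⟨hs.1.le, hsT.le⟩]
    congr 1
    refine Filter.EventuallyEq.deriv_eq ?_
    filter_upwards [Iio_mem_nhds hsT] with r hr using appendSegment_toFun_of_le v (le_of_lt hr) i

lemma integral_sum_mul_pow_div_factorial (c : ℕ → ℝ) (n : ℕ) (a r : ℝ) :
    ∫ s in a..a + r, ∑ k ∈ Finset.range n, c k * ((s - a) ^ k / k !)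
      = ∑ k ∈ Finset.range n, c k * (r ^ (k + 1) / (k + 1)!) := by
  rw [intervalIntegral.integral_finsetSum fun k _ =>
    Continuous.intervalIntegrable (by fun_prop) _ _]
  refine Finset.sum_congr rfl fun k _ => ?_
  rw [intervalIntegral.integral_const_mul,
    intervalIntegral.integral_comp_sub_right (fun σ => σ ^ k / k !), sub_self,
    add_sub_cancel_left, intervalIntegral.integral_div, integral_pow, Nat.factorial_succ]
  push_cast
  field_simp
  ring

lemma deriv_appendSegment (X : RawPath α) (v : α → ℝ) (j : α) {s : ℝ}
    (hs : s ∈ Ioo X.T (X.T + 1)) : deriv (fun s => (appendSegment X v).toFun s j) s = v j := by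
  have : (fun s => (appendSegment X v).toFun s j) =ᶠ[nhds s]
      fun s => X.toFun X.T j + v j * (s - X.T) := by
    filter_upwards [Ioi_mem_nhds hs.1] with s (hs : X.T < s)
    simp [appendSegment, hs.le]
  rw [this.deriv_eq]
  simp

/-- Chen's identity for a path followed by a straight segment. -/
lemma IsPath.sigRev_appendSegment {X : RawPath α} (hX : IsPath X) (v : α → ℝ) (u : Word α)
    {r : ℝ} (hr : r ∈ Icc 0 1) :
    sigRev (appendSegment X v).toFun u (X.T + r)
      = ∑ k ∈ Finset.range (u.length + 1),
          ((u.take k).map v).prod * sigRev X.toFun (u.drop k) X.T * (r ^ k / k !) := by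
  induction u generalizing r with
  | nil => simp [sigRev]
  | cons i w ih =>
    set Y := appendSegment X v
    have hY := isPath_appendSegment hX v
    have hmem {s : ℝ} (hs : s ∈ Icc 0 (X.T + 1)) : s ∈ Icc 0 Y.T := hs
    have h0 : (0 : ℝ) ∈ Icc 0 (X.T + 1) := ⟨le_rfl, by linarith [hX.1]⟩
    have hT : X.T ∈ Icc 0 (X.T + 1) := ⟨hX.1.le, by linarith⟩
    have hTr : X.T + r ∈ Icc 0 (X.T + 1) := ⟨by linarith [hX.1, hr.1], by linarith [hr.2]⟩
    calc sigRev Y.toFun (i :: w) (X.T + r)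
        = sigRev X.toFun (i :: w) X.T
          + ∫ s in X.T..X.T + r, sigRev Y.toFun w s * deriv (fun s => Y.toFun s i) s := by
          rw [← sigRev_appendSegment_of_mem_Icc X v _ (right_mem_Icc.2 hX.1.le), sigRev.eq_2,
            sigRev.eq_2, intervalIntegral.integral_add_adjacent_intervals
              (hY.intervalIntegrable_sigRev_mul_deriv w i (hmem h0) (hmem hT))
              (hY.intervalIntegrable_sigRev_mul_deriv w i (hmem hT) (hmem hTr))]
      _ = sigRev X.toFun (i :: w) X.T
          + ∫ s in X.T..X.T + r, (∑ k ∈ Finset.range (w.length + 1),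
              ((w.take k).map v).prod * sigRev X.toFun (w.drop k) X.T
                * ((s - X.T) ^ k / k !)) * v i := by
          congr 1
          refine intervalIntegral.integral_congr_ae ?_
          filter_upwards [compl_mem_ae_iff.2 (measure_singleton (X.T + r))] with s hsr hs
          rw [uIoc_of_le (by linarith [hr.1])] at hs
          have hs' : s ∈ Ioo X.T (X.T + 1) :=
            ⟨hs.1, (lt_of_le_of_ne hs.2 hsr).trans_le (by linarith [hr.2])⟩
          rw [deriv_appendSegment X v i hs', ← ih ⟨by linarith [hs.1], by linarith [hs'.2]⟩,
            add_sub_cancel]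
      _ = sigRev X.toFun (i :: w) X.T
          + ∑ k ∈ Finset.range (w.length + 1),
              v i * ((w.take k).map v).prod * sigRev X.toFun (w.drop k) X.T
                * (r ^ (k + 1) / (k + 1)!) := by
          rw [intervalIntegral.integral_mul_const, integral_sum_mul_pow_div_factorial,
            Finset.sum_mul]
          congr 1
          exact Finset.sum_congr rfl fun k _ => by ring
      _ = _ := by
          rw [List.length_cons, Finset.sum_range_succ' _ (w.length + 1)]
          simp [add_comm, mul_assoc]

/-- The transpose of right multiplication by the letter `i`: it sends `w i` to `w` and kills
the words not ending in `i`. -/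
noncomputable def rightDeriv (i : α) : TA α →ₗ[ℝ] TA α :=
  Finsupp.lcomapDomain (· ++ [i]) (List.append_left_injective [i])

lemma rightDeriv_apply (i : α) (y : TA α) (w : Word α) : rightDeriv i y w = y (w ++ [i]) :=
  rfl

lemma pair_rightDeriv_single [DecidableEq α] (X : RawPath α) (i j : α) (w : Word α) :
    pair X (rightDeriv i (Finsupp.single (w ++ [j]) 1)) = if j = i then sig X w else 0 := by
  have : rightDeriv i (Finsupp.single (w ++ [j]) 1) = if j = i then Finsupp.single w 1 else 0 := by
    ext w'
    split_ifs with h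
    · simp [rightDeriv_apply, h, Finsupp.single_apply]
    · simp [rightDeriv_apply, Ne.symm h]
  split_ifs at this ⊢ <;> simp [this, pair]

lemma pair_rightDeriv_single_nil (X : RawPath α) (i : α) :
    pair X (rightDeriv i (Finsupp.single [] 1)) = 0 := by
  have : rightDeriv i (Finsupp.single [] 1) = 0 := by
    ext w'
    simp [rightDeriv_apply]
  simp [this, pair]

lemma IsPath.exists_polynomial_sig_appendSegment [DecidableEq α] {X : RawPath α} (hX : IsPath X)
    (i : α) (w : Word α) :
    ∃ p : Polynomial ℝ, (∀ a, p.eval a = sig (appendSegment X (a • Pi.single i 1)) w) ∧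
      p.coeff 1 = pair X (rightDeriv i (Finsupp.single w 1)) := by
  obtain ⟨u, rfl⟩ : ∃ u, w = u.reverse := ⟨w.reverse, by simp⟩
  set e : α → ℝ := Pi.single i 1
  refine ⟨∑ k ∈ Finset.range (u.length + 1), Polynomial.C (((u.take k).map e).prod
    * sigRev X.toFun (u.drop k) X.T / k !) * Polynomial.X ^ k, fun a => ?_, ?_⟩
  · have hprod (k : ℕ) (hk : k ∈ Finset.range (u.length + 1)) :
        ((u.take k).map (a • e)).prod = a ^ k * ((u.take k).map e).prod := by
      have : (u.take k).length = k :=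
        List.length_take_of_le (Nat.lt_succ_iff.1 (Finset.mem_range.1 hk))
      rw [show a • e = fun j => a * e j from rfl, List.prod_map_mul, List.map_const',
        List.prod_replicate, this]
    rw [sig, sigUpTo, List.reverse_reverse, show (appendSegment X (a • e)).T = X.T + 1 from rfl,
      hX.sigRev_appendSegment _ u ⟨zero_le_one, le_rfl⟩]
    simp only [Polynomial.eval_finsetSum, Polynomial.eval_mul, Polynomial.eval_C,
      Polynomial.eval_pow, Polynomial.eval_X]
    refine Finset.sum_congr rfl fun k hk => ?_
    rw [hprod k hk]
    ring
  · simp only [Polynomial.finsetSum_coeff, Polynomial.coeff_C_mul_X_pow, Finset.sum_ite_eq,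
      Finset.mem_range]
    cases u with
    | nil => simp [pair_rightDeriv_single_nil]
    | cons j u =>
      simp [pair_rightDeriv_single, e, Pi.single_apply, sig, sigUpTo]

lemma IsPath.exists_polynomial_pair_appendSegment [DecidableEq α] {X : RawPath α}
    (hX : IsPath X) (i : α) (y : TA α) :
    ∃ p : Polynomial ℝ, (∀ a, p.eval a = pair (appendSegment X (a • Pi.single i 1)) y) ∧
      p.coeff 1 = pair X (rightDeriv i y) := by
  induction y using Finsupp.induction_linear with
  | zero => exact ⟨0, by simp [pair], by simp [pair]⟩
  | add y z hy hz =>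
    obtain ⟨p, hp, hp1⟩ := hy
    obtain ⟨q, hq, hq1⟩ := hz
    exact ⟨p + q, by simp [hp, hq, pair], by simp [hp1, hq1, pair]⟩
  | single w c =>
    obtain ⟨p, hp, hp1⟩ := hX.exists_polynomial_sig_appendSegment i w
    refine ⟨Polynomial.C c * p, fun a => ?_, ?_⟩
    · simp [hp, pair]
    · rw [Polynomial.coeff_C_mul, hp1, pair, pair, ← smul_eq_mul, ← map_smul, ← map_smul,
        Finsupp.smul_single_one]

lemma pair_rightDeriv_eq_zero {y : TA α} (hy : ∀ X, IsPath X → pair X y = 0) (i : α)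
    {X : RawPath α} (hX : IsPath X) : pair X (rightDeriv i y) = 0 := by
  classical
  obtain ⟨p, hp, hp1⟩ := hX.exists_polynomial_pair_appendSegment i y
  have : p = 0 := Polynomial.funext fun a => by
    rw [hp, hy _ (isPath_appendSegment hX _), Polynomial.eval_zero]
  rw [← hp1, this, Polynomial.coeff_zero]

theorem eq_zero_of_forall_pair_eq_zero {y : TA α} (hy : ∀ X, IsPath X → pair X y = 0) :
    y = 0 := by
  suffices ∀ (u : Word α) (y : TA α), (∀ X, IsPath X → pair X y = 0) → y u.reverse = 0 from
    Finsupp.ext fun w => by simpa using this w.reverse y hy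
  intro u
  induction u with
  | nil => exact fun y hy => by simpa [pair_constPath] using hy _ isPath_constPath
  | cons i u ih =>
    intro y hy
    rw [List.reverse_cons, ← rightDeriv_apply]
    exact ih _ fun X hX => pair_rightDeriv_eq_zero hy i hX

/-- If `F` maps paths in `ℝ^d` to paths in `ℝ^t` and `H` is a linear
map with `⟨σ(F(X)), x⟩ = ⟨σ(X), Hx⟩` for all paths `X` and all `x`, then `H` is a
shuffle homomorphism. -/
theorem statement10 {d t : ℕ} (F : RawPath (Fin d) → RawPath (Fin t))
    (hF : ∀ X, IsPath X → IsPath (F X))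
    (H : TA (Fin t) →ₗ[ℝ] TA (Fin d))
    (hFH : ∀ X : RawPath (Fin d), IsPath X →
      ∀ x : TA (Fin t), pair (F X) x = pair X (H x)) :
    ∀ x₁ x₂ : TA (Fin t), H (sh x₁ x₂) = sh (H x₁) (H x₂) := by
  intro x₁ x₂
  rw [← sub_eq_zero]
  refine eq_zero_of_forall_pair_eq_zero fun X hX => ?_
  rw [pair, map_sub, ← pair, ← pair, ← hFH X hX, (hF X hX).pair_sh, hX.pair_sh, hFH X hX,
    hFH X hX, sub_self]

end PathVarieties
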